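/- arXiv:2411.06988 — 7 statements merged into one kernel-verified Lean document; each statement's English description precedes it below -/
import Mathlib

section
/- If ν, λ : ℝ → ℝ are differentiable on (0, R₀) with ν twice differentiable, and ν satisfies both the vanishing complexity equation ν'(r)·(r·λ'(r) − r·ν'(r) + 2) − 2r·ν''(r) = 0 and the Karmarkar equation 2ν''(r) + (ν'(r))² = ν'(r)·λ'(r)·e^{λ(r)}/(e^{λ(r)} − 1) on (0, R₀), with ν'(r) ≠ 0 and e^{λ(r)} > 1 for all r in (0, R₀), then λ satisfies r·λ'(r)/(e^{λ(r)} − 1) = 2 on (0, R₀). -/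
/-!
Multiplying the Karmarkar condition by `r` and substituting `2 r ν''` from the vanishing complexity
condition gives `ν' (r λ' + 2) = r ν' λ' e^λ / (e^λ - 1)`. Cancelling `ν' ≠ 0` leaves
`2 = r λ' (e^λ / (e^λ - 1) - 1) = r λ' / (e^λ - 1)`.
Below, `ν₁, ν₂, ℓ₁, E` stand for `ν'(r), ν''(r), λ'(r), e^{λ(r)}`.
-/

open Set

theorem div_sub_one_eq_two_of_complexity_of_karmarkar {r ν₁ ν₂ ℓ₁ E : ℝ} (hν₁ : ν₁ ≠ 0)
    (hE : E - 1 ≠ 0) (hVC : ν₁ * (r * ℓ₁ - r * ν₁ + 2) - 2 * r * ν₂ = 0)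
    (hK : 2 * ν₂ + ν₁ ^ 2 = ν₁ * ℓ₁ * E / (E - 1)) :
    r * ℓ₁ / (E - 1) = 2 := by
  have hsubst : ν₁ * (r * ℓ₁ + 2) = r * (ν₁ * ℓ₁ * E / (E - 1)) := by
    linear_combination r * hK + hVC
  have hcancel : r * ℓ₁ + 2 = r * ℓ₁ * E / (E - 1) := by
    apply mul_left_cancel₀ hν₁
    rw [hsubst]
    ring
  calc r * ℓ₁ / (E - 1) = r * ℓ₁ * E / (E - 1) - r * ℓ₁ := by field_simp; ring
    _ = 2 := by rw [← hcancel]; ring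

theorem vanishing_complexity_and_karmarkar_imply_lambda_ode_general
    (R₀ : ℝ) (f g : ℝ → ℝ)
    (hVC : ∀ r ∈ Ioo 0 R₀,
      deriv f r * (r * deriv g r - r * deriv f r + 2) - 2 * r * deriv (deriv f) r = 0)
    (hK : ∀ r ∈ Ioo 0 R₀,
      2 * deriv (deriv f) r + (deriv f r) ^ 2
        = deriv f r * deriv g r * Real.exp (g r) / (Real.exp (g r) - 1))
    (hf'ne : ∀ r ∈ Ioo 0 R₀, deriv f r ≠ 0)
    (hgt : ∀ r ∈ Ioo 0 R₀, 1 < Real.exp (g r)) :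
    ∀ r ∈ Ioo 0 R₀, r * deriv g r / (Real.exp (g r) - 1) = 2 := fun r hr =>
  div_sub_one_eq_two_of_complexity_of_karmarkar (hf'ne r hr) (sub_ne_zero.2 (hgt r hr).ne')
    (hVC r hr) (hK r hr)

theorem vanishing_complexity_and_karmarkar_imply_lambda_ode
    (R₀ : ℝ) (hR₀ : 0 < R₀) (f g : ℝ → ℝ)
    (hf : DifferentiableOn ℝ f (Ioo 0 R₀))
    (hf' : DifferentiableOn ℝ (deriv f) (Ioo 0 R₀))
    (hg : DifferentiableOn ℝ g (Ioo 0 R₀))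
    (hVC : ∀ r ∈ Ioo 0 R₀,
      deriv f r * (r * deriv g r - r * deriv f r + 2) - 2 * r * deriv (deriv f) r = 0)
    (hK : ∀ r ∈ Ioo 0 R₀,
      2 * deriv (deriv f) r + (deriv f r) ^ 2
        = deriv f r * deriv g r * Real.exp (g r) / (Real.exp (g r) - 1))
    (hf'ne : ∀ r ∈ Ioo 0 R₀, deriv f r ≠ 0)
    (hgt : ∀ r ∈ Ioo 0 R₀, 1 < Real.exp (g r)) :
    ∀ r ∈ Ioo 0 R₀, r * deriv g r / (Real.exp (g r) - 1) = 2 :=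
  vanishing_complexity_and_karmarkar_imply_lambda_ode_general R₀ f g hVC hK hf'ne hgt
end

section
/- If λ : ℝ → ℝ is differentiable on (0, R₀) with e^{λ(r)} > 1 and satisfies λ'(r)/(e^{λ(r)} − 1) = 2/r on (0, R₀), then there exists a constant R > 0 such that e^{λ(r)} = 1/(1 − r²/R²) for all r in (0, R₀). -/
/-!
With `u = 1 - exp (-g)` the equation `g' = (2 / r) (exp g - 1)` becomes the linear equation
`u' = 2 u / r`, so `u / r ^ 2` is a constant `c`, positive because `g > 0`. Then
`exp g = 1 / (1 - c r ^ 2)`, and `R = c ^ (-1/2)`.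
-/

open Real Set

theorem hasDerivAt_one_sub_exp_neg_div_sq_eq_zero {g : ℝ → ℝ} {r : ℝ} (hr : r ≠ 0)
    (hg : HasDerivAt g (2 / r * (exp (g r) - 1)) r) :
    HasDerivAt (fun x => (1 - exp (-g x)) / x ^ 2) 0 r := by
  have hu : HasDerivAt (fun x => 1 - exp (-g x)) (2 / r * (1 - exp (-g r))) r := by
    refine ((hasDerivAt_const r 1).sub hg.neg.exp).congr_deriv ?_
    rw [Pi.neg_apply, exp_neg]
    field_simp
    ring
  refine (hu.div (hasDerivAt_pow 2 r) (pow_ne_zero 2 hr)).congr_deriv ?_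
  field_simp
  ring

theorem exists_one_sub_exp_neg_eq_mul_sq {g : ℝ → ℝ} {s : Set ℝ} (hs : IsOpen s)
    (hs' : IsPreconnected s) (hs0 : (0 : ℝ) ∉ s) (hg : DifferentiableOn ℝ g s)
    (hODE : ∀ r ∈ s, deriv g r = 2 / r * (exp (g r) - 1)) :
    ∃ c, ∀ r ∈ s, 1 - exp (-g r) = c * r ^ 2 := by
  have hr0 : ∀ r ∈ s, r ≠ 0 := fun r hr h => hs0 (h ▸ hr)
  have hF : ∀ r ∈ s, HasDerivAt (fun x => (1 - exp (-g x)) / x ^ 2) 0 r := fun r hr =>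
    hasDerivAt_one_sub_exp_neg_div_sq_eq_zero (hr0 r hr)
      (hODE r hr ▸ (hg.differentiableAt (hs.mem_nhds hr)).hasDerivAt)
  obtain ⟨c, hc⟩ := hs.exists_is_const_of_deriv_eq_zero hs'
    (fun r hr => (hF r hr).differentiableAt.differentiableWithinAt)
    (fun r hr => (hF r hr).deriv)
  refine ⟨c, fun r hr => ?_⟩
  rw [← hc r hr, div_mul_cancel₀ _ (pow_ne_zero 2 (hr0 r hr))]

theorem lambda_ode_solution
    (R₀ : ℝ) (hR₀ : 0 < R₀) (g : ℝ → ℝ)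
    (hg : DifferentiableOn ℝ g (Ioo 0 R₀))
    (hgt : ∀ r ∈ Ioo 0 R₀, 1 < Real.exp (g r))
    (hODE : ∀ r ∈ Ioo 0 R₀, deriv g r / (Real.exp (g r) - 1) = 2 / r) :
    ∃ R : ℝ, 0 < R ∧ ∀ r ∈ Ioo 0 R₀, Real.exp (g r) = 1 / (1 - r ^ 2 / R ^ 2) := by
  have hODE' : ∀ r ∈ Ioo 0 R₀, deriv g r = 2 / r * (exp (g r) - 1) := fun r hr =>
    (div_eq_iff (sub_ne_zero.2 (hgt r hr).ne')).1 (hODE r hr)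
  obtain ⟨c, hc⟩ := exists_one_sub_exp_neg_eq_mul_sq isOpen_Ioo isPreconnected_Ioo
    (fun h => lt_irrefl 0 h.1) hg hODE'
  have hmid : R₀ / 2 ∈ Ioo 0 R₀ := ⟨by linarith, by linarith⟩
  have hc_pos : 0 < c := by
    have hpos : 0 < c * (R₀ / 2) ^ 2 := by
      rw [← hc _ hmid, sub_pos, exp_lt_one_iff, neg_lt_zero, ← one_lt_exp_iff]
      exact hgt _ hmid
    exact pos_of_mul_pos_left hpos (by positivity)
  refine ⟨(√c)⁻¹, by positivity, fun r hr => ?_⟩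
  rw [inv_pow, sq_sqrt hc_pos.le, div_inv_eq_mul, mul_comm, ← hc r hr, sub_sub_cancel, exp_neg,
    one_div, inv_inv]
end

section
/- For 0 < r < R and constants C, D with C − D√(1 − r²/R²) ≠ 0, the functions ν(r) = 2·log|C − D√(1 − r²/R²)| and λ(r) = −log(1 − r²/R²) satisfy the vanishing complexity equation ν'(r)·(r·λ'(r) − r·ν'(r) + 2) − 2r·ν''(r) = 0. -/
/-!
Writing `ν = 2 log W`, the terms in `W'²` cancel and the complexity bracket becomes
`(2 / W) (W' (r λ' + 2) - 2 r W'')`. For the Schwarzschild interior `W = C - D s` with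
`s = √(1 - r²/R²)` and `e^λ = 1 / s²`, one has `W' = (D / R²) r / s`, `W'' = D / (R² s³)`
and `r λ' + 2 = 2 / s²`, so the bracket vanishes identically in `C` and `D`.
-/

open Real Set Filter Topology

/-- `Y_TF = e^{-λ} * complexityBracket ν λ r / (4 r)`. -/
noncomputable def complexityBracket (ν lam : ℝ → ℝ) (r : ℝ) : ℝ :=
  deriv ν r * (r * deriv lam r - r * deriv ν r + 2) - 2 * r * deriv (deriv ν) r

theorem complexityBracket_two_mul_log {W W' : ℝ → ℝ} {W'' r : ℝ} (lam : ℝ → ℝ)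
    (hW : ∀ᶠ x in 𝓝 r, HasDerivAt W (W' x) x) (hW' : HasDerivAt W' W'' r) (hWr : W r ≠ 0) :
    complexityBracket (fun x => 2 * log (W x)) lam r =
      2 / W r * (W' r * (r * deriv lam r + 2) - 2 * r * W'') := by
  have hWne : ∀ᶠ x in 𝓝 r, W x ≠ 0 := hW.self_of_nhds.continuousAt.eventually_ne hWr
  have hderiv : deriv (fun x => 2 * log (W x)) =ᶠ[𝓝 r] fun x => 2 * (W' x / W x) := by
    filter_upwards [hW, hWne] with x hx hx0
    exact ((hx.log hx0).const_mul 2).deriv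
  have hderiv2 : HasDerivAt (fun x => 2 * (W' x / W x))
      (2 * ((W'' * W r - W' r * W' r) / W r ^ 2)) r :=
    (hW'.div hW.self_of_nhds hWr).const_mul 2
  rw [complexityBracket, hderiv.self_of_nhds, hderiv.deriv_eq, hderiv2.deriv]
  field_simp
  ring

theorem one_sub_sq_div_sq_pos {R x : ℝ} (hx : x ∈ Ioo (-R) R) : 0 < 1 - x ^ 2 / R ^ 2 := by
  rw [sub_pos, div_lt_one (by nlinarith [hx.1, hx.2])]
  exact sq_lt_sq' hx.1 hx.2

theorem hasDerivAt_one_sub_sq_div_sq (R x : ℝ) :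
    HasDerivAt (fun y => 1 - y ^ 2 / R ^ 2) (-(2 * x) / R ^ 2) x := by
  simpa [neg_div] using ((hasDerivAt_pow 2 x).div_const (R ^ 2)).const_sub 1

theorem hasDerivAt_sqrt_one_sub_sq_div_sq {R x : ℝ} (hx : 0 < 1 - x ^ 2 / R ^ 2) :
    HasDerivAt (fun y => √(1 - y ^ 2 / R ^ 2)) (-x / (R ^ 2 * √(1 - x ^ 2 / R ^ 2))) x :=
  ((hasDerivAt_one_sub_sq_div_sq R x).sqrt hx.ne').congr_deriv (by ring)

theorem hasDerivAt_div_sqrt_one_sub_sq_div_sq {R x : ℝ} (hR : R ≠ 0)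
    (hx : 0 < 1 - x ^ 2 / R ^ 2) :
    HasDerivAt (fun y => y / √(1 - y ^ 2 / R ^ 2)) (1 / √(1 - x ^ 2 / R ^ 2) ^ 3) x := by
  have hs : 0 < √(1 - x ^ 2 / R ^ 2) := sqrt_pos.mpr hx
  have hs2 : √(1 - x ^ 2 / R ^ 2) ^ 2 = 1 - x ^ 2 / R ^ 2 := sq_sqrt hx.le
  refine ((hasDerivAt_id' x).fun_div (hasDerivAt_sqrt_one_sub_sq_div_sq hx) hs.ne').congr_deriv ?_
  generalize √(1 - x ^ 2 / R ^ 2) = s at hs hs2 ⊢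
  field_simp
  rw [hs2]
  field_simp
  ring

theorem hasDerivAt_neg_log_one_sub_sq_div_sq {R x : ℝ} (hx : 1 - x ^ 2 / R ^ 2 ≠ 0) :
    HasDerivAt (fun y => -log (1 - y ^ 2 / R ^ 2)) (2 * x / (R ^ 2 * (1 - x ^ 2 / R ^ 2))) x :=
  ((hasDerivAt_one_sub_sq_div_sq R x).log hx).neg.congr_deriv
    (by rw [neg_div, neg_div, neg_neg, div_div])

theorem schwarzschild_interior_vanishing_complexity_general
    (R C D : ℝ) :
    ∀ r : ℝ, 0 < r → r < R →
      C - D * Real.sqrt (1 - r ^ 2 / R ^ 2) ≠ 0 →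
      (fun (f g : ℝ → ℝ) =>
        deriv f r * (r * deriv g r - r * deriv f r + 2)
          - 2 * r * deriv (deriv f) r = 0)
      (fun r => 2 * Real.log |C - D * Real.sqrt (1 - r ^ 2 / R ^ 2)|)
      (fun r => -Real.log (1 - r ^ 2 / R ^ 2)) := by
  intro r hr hrR hW
  have hR0 : R ≠ 0 := (hr.trans hrR).ne'
  have hr_mem : r ∈ Ioo (-R) R := ⟨by linarith, hrR⟩
  have hur := one_sub_sq_div_sq_pos hr_mem
  have hWderiv : ∀ᶠ x in 𝓝 r, HasDerivAt (fun y => C - D * √(1 - y ^ 2 / R ^ 2))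
      (D / R ^ 2 * (x / √(1 - x ^ 2 / R ^ 2))) x := by
    filter_upwards [Ioo_mem_nhds hr_mem.1 hr_mem.2] with x hx
    have hs := hasDerivAt_sqrt_one_sub_sq_div_sq (one_sub_sq_div_sq_pos hx)
    exact ((hs.const_mul D).const_sub C).congr_deriv (by ring)
  have hbracket := complexityBracket_two_mul_log (fun y => -log (1 - y ^ 2 / R ^ 2)) hWderiv
    ((hasDerivAt_div_sqrt_one_sub_sq_div_sq hR0 hur).const_mul (D / R ^ 2)) hW
  have hrlam :
      r * (2 * r / (R ^ 2 * (1 - r ^ 2 / R ^ 2))) + 2 = 2 / √(1 - r ^ 2 / R ^ 2) ^ 2 := by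
    have hRr : R ^ 2 - r ^ 2 ≠ 0 := by nlinarith
    rw [sq_sqrt hur.le]
    field_simp
    ring
  show complexityBracket (fun x => 2 * log |C - D * √(1 - x ^ 2 / R ^ 2)|) _ r = 0
  simp only [log_abs]
  rw [hbracket, (hasDerivAt_neg_log_one_sub_sq_div_sq hur.ne').deriv, hrlam]
  ring

theorem schwarzschild_interior_vanishing_complexity
    (R C D : ℝ) (hR : 0 < R) :
    ∀ r : ℝ, 0 < r → r < R →
      C - D * Real.sqrt (1 - r ^ 2 / R ^ 2) ≠ 0 →
      (fun (f g : ℝ → ℝ) =>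
        deriv f r * (r * deriv g r - r * deriv f r + 2)
          - 2 * r * deriv (deriv f) r = 0)
      (fun r => 2 * Real.log |C - D * Real.sqrt (1 - r ^ 2 / R ^ 2)|)
      (fun r => -Real.log (1 - r ^ 2 / R ^ 2)) :=
  schwarzschild_interior_vanishing_complexity_general R C D
end

section
/- Suppose ν, λ are smooth on (0, R₀), ν' never vanishes, e^{λ} > 1 on (0, R₀), and ν, λ satisfy both the vanishing complexity equation ν'(rλ' − rν' + 2) − 2rν'' = 0 and the Karmarkar condition 2ν'' + ν'² = ν'λ'e^λ/(e^λ − 1). Then they also satisfy the conformal flatness equation (1 − e^λ)/r² − ν'λ'/4 − (ν' − λ')/(2r) + ν''/2 + ν'²/4 = 0 on (0, R₀). -/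
open Real Set

theorem vanishing_complexity_karmarkar_imply_conformal_flatness
    (R₀ : ℝ) (hR₀ : 0 < R₀) (f g : ℝ → ℝ)
    (hf : ContDiffOn ℝ (⊤ : ℕ∞) f (Ioo 0 R₀))
    (hg : ContDiffOn ℝ (⊤ : ℕ∞) g (Ioo 0 R₀))
    (hf'ne : ∀ r ∈ Ioo 0 R₀, deriv f r ≠ 0)
    (hgt : ∀ r ∈ Ioo 0 R₀, 1 < Real.exp (g r))
    (hVC : ∀ r ∈ Ioo 0 R₀,
      deriv f r * (r * deriv g r - r * deriv f r + 2) - 2 * r * deriv (deriv f) r = 0)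
    (hK : ∀ r ∈ Ioo 0 R₀,
      2 * deriv (deriv f) r + (deriv f r) ^ 2
        = deriv f r * deriv g r * Real.exp (g r) / (Real.exp (g r) - 1)) :
    ∀ r ∈ Ioo 0 R₀,
      (1 - Real.exp (g r)) / r ^ 2 - deriv f r * deriv g r / 4
        - (deriv f r - deriv g r) / (2 * r)
        + deriv (deriv f) r / 2 + (deriv f r) ^ 2 / 4 = 0 := by
  intro r hr
  have hr0 : 0 < r := hr.1
  have hrne : r ≠ 0 := ne_of_gt hr0
  have h1 := hVC r hr
  have h2 := hK r hr
  have hE := hgt r hr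
  have ha := hf'ne r hr
  set a := deriv f r with haa
  set b := deriv g r with hbb
  set c := deriv (deriv f) r with hcc
  set E := Real.exp (g r) with hEE
  have hE1 : E - 1 ≠ 0 := by linarith [sub_pos.mpr hE]
  rw [eq_div_iff hE1] at h2
  -- derive r*b = 2*(E-1)
  have key : a * (r * b) = a * (2 * (E - 1)) := by nlinarith [h1, h2]
  have hb : r * b = 2 * (E - 1) := mul_left_cancel₀ ha key
  field_simp
  nlinarith [h1, hb]
end

section
/- If ν is twice differentiable on an interval where e^{λ} > 1, with ν' ≠ 0, and satisfies the Karmarkar condition 2ν'' + ν'² = ν'λ'e^λ/(e^λ − 1), then e^{ν} = (C + D·∫√(e^{λ} − 1) dr)² for some constants C, D; equivalently, with y = e^{ν/2}, one has y''/y' = (d/dr) log√(e^λ − 1), so y' is proportional to √(e^λ − 1). -/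
/-!
With `y = exp (f / 2)` one has `y'' / y' = (2 f'' + f'²) / (2 f')`, so Karmarkar's condition says
exactly that `y'' / y' = S' / S` for `S = √(exp g - 1)`. Hence the Wronskian-type expression
`y'' S - y' S'` vanishes, `y' / S` is a constant `D`, and `y - D F` is a constant `C`.
-/

open Real Set

namespace IsOpen

variable {s : Set ℝ}

theorem exists_eq_const_mul_of_hasDerivAt (hs : IsOpen s) (hs' : IsPreconnected s)
    {u S u' S' : ℝ → ℝ} (hu : ∀ x ∈ s, HasDerivAt u (u' x) x)
    (hS : ∀ x ∈ s, HasDerivAt S (S' x) x) (hS₀ : ∀ x ∈ s, S x ≠ 0)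
    (hW : ∀ x ∈ s, u' x * S x = u x * S' x) :
    ∃ D, ∀ x ∈ s, u x = D * S x := by
  have hquot : ∀ x ∈ s, HasDerivAt (u / S) 0 x := fun x hx => by
    simpa [hW x hx] using (hu x hx).div (hS x hx) (hS₀ x hx)
  obtain ⟨D, hD⟩ := hs.exists_is_const_of_deriv_eq_zero hs'
    (fun x hx => (hquot x hx).differentiableAt.differentiableWithinAt)
    (fun x hx => (hquot x hx).deriv)
  exact ⟨D, fun x hx => by rw [← hD x hx, Pi.div_apply, div_mul_cancel₀ _ (hS₀ x hx)]⟩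

theorem exists_eq_add_const_mul_of_hasDerivAt (hs : IsOpen s) (hs' : IsPreconnected s)
    {y F S : ℝ → ℝ} {D : ℝ} (hy : ∀ x ∈ s, HasDerivAt y (D * S x) x)
    (hF : ∀ x ∈ s, HasDerivAt F (S x) x) :
    ∃ C, ∀ x ∈ s, y x = C + D * F x := by
  have hDF : ∀ x ∈ s, HasDerivAt (fun t => D * F t) (D * S x) x :=
    fun x hx => (hF x hx).const_mul D
  obtain ⟨C, hC⟩ := hs.exists_eq_add_of_deriv_eq hs'
    (fun x hx => (hy x hx).differentiableAt.differentiableWithinAt)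
    (fun x hx => (hDF x hx).differentiableAt.differentiableWithinAt)
    (fun x hx => (hy x hx).deriv.trans (hDF x hx).deriv.symm)
  exact ⟨C, fun x hx => by rw [hC hx, add_comm]⟩

end IsOpen

theorem hasDerivAt_sqrt_exp_sub_one {g : ℝ → ℝ} {g' x : ℝ} (hg : HasDerivAt g g' x)
    (h : 1 < exp (g x)) :
    HasDerivAt (fun t => √(exp (g t) - 1)) (g' * exp (g x) / (2 * √(exp (g x) - 1))) x := by
  simpa [mul_comm] using (hg.exp.sub_const 1).sqrt (sub_pos.2 h).ne'

theorem karmarkar_wronskian {f' f'' g' a E : ℝ} (ha : 1 < a)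
    (hK : 2 * f'' + f' ^ 2 = f' * g' * a / (a - 1)) :
    (2 * f'' + f' ^ 2) / 4 * E * √(a - 1) = f' / 2 * E * (g' * a / (2 * √(a - 1))) := by
  have ha' : 0 < a - 1 := sub_pos.2 ha
  have hsq : √(a - 1) ^ 2 = a - 1 := sq_sqrt ha'.le
  have hsqrt : √(a - 1) ≠ 0 := (sqrt_pos.2 ha').ne'
  rw [hK]
  field_simp
  rw [hsq]
  ring

theorem karmarkar_general_solution_general
    (R₀ : ℝ) (f g F : ℝ → ℝ)
    (hf : DifferentiableOn ℝ f (Ioo 0 R₀))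
    (hf' : DifferentiableOn ℝ (deriv f) (Ioo 0 R₀))
    (hg : DifferentiableOn ℝ g (Ioo 0 R₀))
    (hgt : ∀ r ∈ Ioo 0 R₀, 1 < Real.exp (g r))
    (hF : ∀ r ∈ Ioo 0 R₀, HasDerivAt F (Real.sqrt (Real.exp (g r) - 1)) r)
    (hK : ∀ r ∈ Ioo 0 R₀,
      2 * deriv (deriv f) r + (deriv f r) ^ 2
        = deriv f r * deriv g r * Real.exp (g r) / (Real.exp (g r) - 1)) :
    ∃ C D : ℝ, ∀ r ∈ Ioo 0 R₀, Real.exp (f r) = (C + D * F r) ^ 2 := by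
  have hs : IsOpen (Ioo 0 R₀) := isOpen_Ioo
  have hderiv {h : ℝ → ℝ} (hh : DifferentiableOn ℝ h (Ioo 0 R₀)) :
      ∀ r ∈ Ioo 0 R₀, HasDerivAt h (deriv h r) r :=
    fun r hr => (hh.differentiableAt (hs.mem_nhds hr)).hasDerivAt
  set y : ℝ → ℝ := fun t => exp (f t / 2)
  have hy : ∀ r ∈ Ioo 0 R₀, HasDerivAt y (deriv f r / 2 * y r) r := fun r hr => by
    simpa [y, mul_comm] using ((hderiv hf r hr).div_const 2).exp
  have hy' : ∀ r ∈ Ioo 0 R₀, HasDerivAt (fun t => deriv f t / 2 * y t)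
      ((2 * deriv (deriv f) r + deriv f r ^ 2) / 4 * y r) r := fun r hr => by
    exact (((hderiv hf' r hr).div_const 2).mul (hy r hr)).congr_deriv (by ring)
  obtain ⟨D, hD⟩ := hs.exists_eq_const_mul_of_hasDerivAt isPreconnected_Ioo hy'
    (fun r hr => hasDerivAt_sqrt_exp_sub_one (hderiv hg r hr) (hgt r hr))
    (fun r hr => (sqrt_pos.2 (sub_pos.2 (hgt r hr))).ne')
    (fun r hr => karmarkar_wronskian (hgt r hr) (hK r hr))
  obtain ⟨C, hC⟩ := hs.exists_eq_add_const_mul_of_hasDerivAt isPreconnected_Ioo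
    (fun r hr => hD r hr ▸ hy r hr) hF
  refine ⟨C, D, fun r hr => ?_⟩
  rw [← hC r hr, sq, ← exp_add, add_halves]

theorem karmarkar_general_solution
    (R₀ : ℝ) (hR₀ : 0 < R₀) (f g F : ℝ → ℝ)
    (hf : DifferentiableOn ℝ f (Ioo 0 R₀))
    (hf' : DifferentiableOn ℝ (deriv f) (Ioo 0 R₀))
    (hg : DifferentiableOn ℝ g (Ioo 0 R₀))
    (hf'ne : ∀ r ∈ Ioo 0 R₀, deriv f r ≠ 0)
    (hgt : ∀ r ∈ Ioo 0 R₀, 1 < Real.exp (g r))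
    (hF : ∀ r ∈ Ioo 0 R₀, HasDerivAt F (Real.sqrt (Real.exp (g r) - 1)) r)
    (hK : ∀ r ∈ Ioo 0 R₀,
      2 * deriv (deriv f) r + (deriv f r) ^ 2
        = deriv f r * deriv g r * Real.exp (g r) / (Real.exp (g r) - 1)) :
    ∃ C D : ℝ, ∀ r ∈ Ioo 0 R₀, Real.exp (f r) = (C + D * F r) ^ 2 :=
  karmarkar_general_solution_general R₀ f g F hf hf' hg hgt hF hK
end

section
/- For the metric functions e^{λ(r)} = 1/(1 − r²/R²) and e^{ν(r)} = (C − D√(1 − r²/R²))² on (0, R), the complexity factor Y_TF(r) = e^{−λ(r)}·[ν'(r)(rλ'(r) − rν'(r) + 2) − 2rν''(r)]/(4r) is identically zero. -/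
/-!
Write `e^ν = y²`. Then `ν' = 2y'/y` and `ν'' = 2y''/y - 2y'²/y²`, and the `y'²` terms cancel in the
bracket of `Y_TF`, which becomes `(2/y)(y'(rλ' + 2) - 2ry'')`. For the Schwarzschild interior
`y = C - D s` with `s = √(1 - r²/R²) = e^{-λ/2}`, so `y' = Dr/(R²s)`, `y'' = D/(R²s³)`,
`rλ' = 2r²/(R²s²)`, and `y'(rλ' + 2) = 2Dr(r²/R² + s²)/(R²s³) = 2ry''`.
-/

open Real Filter Topology

noncomputable def complexityFactor (ν lam : ℝ → ℝ) (r : ℝ) : ℝ :=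
  exp (-lam r) * (deriv ν r * (r * deriv lam r - r * deriv ν r + 2)
    - 2 * r * deriv (deriv ν) r) / (4 * r)

theorem HasDerivAt.log_sq {y : ℝ → ℝ} {y' x : ℝ} (hy : HasDerivAt y y' x) (hx : y x ≠ 0) :
    HasDerivAt (fun x => Real.log (y x ^ 2)) (2 * y' / y x) x :=
  ((hy.fun_pow 2).log (pow_ne_zero 2 hx)).congr_deriv (by field_simp; ring)

theorem complexityFactor_log_sq {y y' lam : ℝ → ℝ} {y'' lam' r : ℝ}
    (hy : ∀ᶠ x in 𝓝 r, HasDerivAt y (y' x) x) (hy' : HasDerivAt y' y'' r) (hyr : y r ≠ 0)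
    (hlam : HasDerivAt lam lam' r) :
    complexityFactor (fun x => log (y x ^ 2)) lam r
      = exp (-lam r) * (y' r * (r * lam' + 2) - 2 * r * y'') / (2 * r * y r) := by
  have hy_ne : ∀ᶠ x in 𝓝 r, y x ≠ 0 := hy.self_of_nhds.continuousAt.eventually_ne hyr
  have hν' : deriv (fun x => log (y x ^ 2)) =ᶠ[𝓝 r] fun x => 2 * y' x / y x := by
    filter_upwards [hy, hy_ne] with x hx hx_ne using (HasDerivAt.log_sq hx hx_ne).deriv
  have hν'' : deriv (deriv fun x => log (y x ^ 2)) r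
      = (2 * y'' * y r - 2 * y' r * y' r) / y r ^ 2 :=
    hν'.deriv_eq.trans ((hy'.const_mul 2).div hy.self_of_nhds hyr).deriv
  rw [complexityFactor, hν'.eq_of_nhds, hν'', hlam.deriv]
  field_simp
  ring

section SchwarzschildInterior

variable {R x : ℝ}

theorem hasDerivAt_one_sub_sq_div :
    HasDerivAt (fun x => 1 - x ^ 2 / R ^ 2) (-(2 * x / R ^ 2)) x := by
  simpa using ((hasDerivAt_pow 2 x).div_const (R ^ 2)).const_sub 1

theorem hasDerivAt_sqrt_one_sub_sq_div (hx : 0 < 1 - x ^ 2 / R ^ 2) :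
    HasDerivAt (fun x => √(1 - x ^ 2 / R ^ 2)) (-(x / (R ^ 2 * √(1 - x ^ 2 / R ^ 2)))) x :=
  (hasDerivAt_one_sub_sq_div.sqrt hx.ne').congr_deriv (by field_simp)

theorem hasDerivAt_div_sqrt_one_sub_sq_div (hR : R ≠ 0) (hx : 0 < 1 - x ^ 2 / R ^ 2) :
    HasDerivAt (fun x => x / (R ^ 2 * √(1 - x ^ 2 / R ^ 2)))
      (1 / (R ^ 2 * √(1 - x ^ 2 / R ^ 2) ^ 3)) x := by
  have hs : 0 < √(1 - x ^ 2 / R ^ 2) := sqrt_pos.mpr hx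
  have hs2 : √(1 - x ^ 2 / R ^ 2) ^ 2 = 1 - x ^ 2 / R ^ 2 := sq_sqrt hx.le
  refine ((hasDerivAt_id' x).div ((hasDerivAt_sqrt_one_sub_sq_div hx).const_mul (R ^ 2))
    (by positivity)).congr_deriv ?_
  generalize √(1 - x ^ 2 / R ^ 2) = s at hs hs2 ⊢
  field_simp
  rw [hs2]
  field_simp
  ring

theorem hasDerivAt_log_one_div_one_sub_sq_div (hx : 0 < 1 - x ^ 2 / R ^ 2) :
    HasDerivAt (fun x => log (1 / (1 - x ^ 2 / R ^ 2)))
      (2 * x / (R ^ 2 * (1 - x ^ 2 / R ^ 2))) x := by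
  simp only [one_div, log_inv]
  exact (hasDerivAt_one_sub_sq_div.log hx.ne').neg.congr_deriv (by field_simp)

end SchwarzschildInterior

theorem schwarzschild_interior_complexity_factor_zero_general
    (R C D : ℝ) :
    ∀ r : ℝ, 0 < r → r < R →
      C - D * Real.sqrt (1 - r ^ 2 / R ^ 2) ≠ 0 →
      (fun (f g : ℝ → ℝ) =>
        Real.exp (-(g r))
          * (deriv f r * (r * deriv g r - r * deriv f r + 2)
              - 2 * r * deriv (deriv f) r) / (4 * r) = 0)
      (fun r => Real.log ((C - D * Real.sqrt (1 - r ^ 2 / R ^ 2)) ^ 2))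
      (fun r => Real.log (1 / (1 - r ^ 2 / R ^ 2))) := by
  intro r hr hrR hw
  have hR : R ≠ 0 := (hr.trans hrR).ne'
  have hu : 0 < 1 - r ^ 2 / R ^ 2 := by
    rw [sub_pos, div_lt_one (by positivity)]
    exact pow_lt_pow_left₀ hrR hr.le two_ne_zero
  have hu_nhds : ∀ᶠ x in 𝓝 r, 0 < 1 - x ^ 2 / R ^ 2 :=
    (isOpen_lt continuous_const (by fun_prop)).mem_nhds hu
  have hy : ∀ᶠ x in 𝓝 r, HasDerivAt (fun x => C - D * √(1 - x ^ 2 / R ^ 2))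
      (D * (x / (R ^ 2 * √(1 - x ^ 2 / R ^ 2)))) x :=
    hu_nhds.mono fun x hx =>
      (((hasDerivAt_sqrt_one_sub_sq_div hx).const_mul D).const_sub C).congr_deriv (by ring)
  show complexityFactor (fun x => log ((C - D * √(1 - x ^ 2 / R ^ 2)) ^ 2))
    (fun x => log (1 / (1 - x ^ 2 / R ^ 2))) r = 0
  rw [complexityFactor_log_sq hy ((hasDerivAt_div_sqrt_one_sub_sq_div hR hu).const_mul D) hw
    (hasDerivAt_log_one_div_one_sub_sq_div hu)]
  have hbalance : D * (r / (R ^ 2 * √(1 - r ^ 2 / R ^ 2)))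
      * (r * (2 * r / (R ^ 2 * (1 - r ^ 2 / R ^ 2))) + 2)
      = 2 * r * (D * (1 / (R ^ 2 * √(1 - r ^ 2 / R ^ 2) ^ 3))) := by
    have hs : 0 < √(1 - r ^ 2 / R ^ 2) := sqrt_pos.mpr hu
    have hs2 : √(1 - r ^ 2 / R ^ 2) ^ 2 = 1 - r ^ 2 / R ^ 2 := sq_sqrt hu.le
    generalize √(1 - r ^ 2 / R ^ 2) = s at hs hs2 ⊢
    rw [← hs2]
    field_simp
    rw [hs2]
    field_simp
    ring
  rw [hbalance, sub_self, mul_zero, zero_div]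

theorem schwarzschild_interior_complexity_factor_zero
    (R C D : ℝ) (hR : 0 < R) :
    ∀ r : ℝ, 0 < r → r < R →
      C - D * Real.sqrt (1 - r ^ 2 / R ^ 2) ≠ 0 →
      (fun (f g : ℝ → ℝ) =>
        Real.exp (-(g r))
          * (deriv f r * (r * deriv g r - r * deriv f r + 2)
              - 2 * r * deriv (deriv f) r) / (4 * r) = 0)
      (fun r => Real.log ((C - D * Real.sqrt (1 - r ^ 2 / R ^ 2)) ^ 2))
      (fun r => Real.log (1 / (1 - r ^ 2 / R ^ 2))) :=
  schwarzschild_interior_complexity_factor_zero_general R C D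
end

section
/- If ν satisfies the vanishing complexity equation ν'(rλ' − rν' + 2) − 2rν'' = 0 with ν' ≠ 0 on (0, R₀) and λ is constant (λ' = 0), then e^{ν(r)} = (A + B r²)² for constants A, B with B ≠ 0. -/
/-!
Put `y = exp (ν / 2)`. Since `λ' = 0`, the left side of the vanishing complexity equation is
`-4r / y` times `y'' - y' / r`, so the equation says `(y' / r)' = 0`. Hence `y' = 2 B r` and `y = A + B r²`,
where `B ≠ 0` because `y' = ν' y / 2` does not vanish.
-/

open Real Set

section

variable {s : Set ℝ}

theorem IsOpen.exists_eq_mul_of_hasDerivAt_div_self {w : ℝ → ℝ} (hs : IsOpen s)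
    (hs' : IsPreconnected s) (h0 : (0 : ℝ) ∉ s) (hw : ∀ r ∈ s, HasDerivAt w (w r / r) r) :
    ∃ c, ∀ r ∈ s, w r = c * r := by
  have hquot : ∀ r ∈ s, HasDerivAt (fun x => w x / x) 0 r := by
    intro r hr
    have hr0 : r ≠ 0 := fun h => h0 (h ▸ hr)
    refine ((hw r hr).div (hasDerivAt_id r) hr0).congr_deriv ?_
    simp [div_mul_cancel₀ _ hr0]
  obtain ⟨c, hc⟩ := hs.exists_is_const_of_deriv_eq_zero hs'
    (fun r hr => (hquot r hr).differentiableAt.differentiableWithinAt)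
    (fun r hr => (hquot r hr).deriv)
  refine ⟨c, fun r hr => ?_⟩
  rw [← hc r hr, div_mul_cancel₀]
  exact fun h => h0 (h ▸ hr)

theorem IsOpen.exists_eq_add_mul_sq_of_hasDerivAt {y : ℝ → ℝ} {c : ℝ} (hs : IsOpen s)
    (hs' : IsPreconnected s) (hy : ∀ r ∈ s, HasDerivAt y (c * r) r) :
    ∃ A, ∀ r ∈ s, y r = A + c / 2 * r ^ 2 := by
  have hsq : ∀ r, HasDerivAt (fun x => c / 2 * x ^ 2) (c * r) r := fun r => by
    refine ((hasDerivAt_pow 2 r).const_mul (c / 2)).congr_deriv ?_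
    ring
  obtain ⟨A, hA⟩ := hs.exists_eq_add_of_deriv_eq hs'
    (fun r hr => (hy r hr).differentiableAt.differentiableWithinAt)
    (fun r _ => (hsq r).differentiableAt.differentiableWithinAt)
    (fun r hr => (hy r hr).deriv.trans (hsq r).deriv.symm)
  exact ⟨A, fun r hr => (hA hr).trans (add_comm _ _)⟩

end

section

variable {f : ℝ → ℝ} {x f'' : ℝ}

theorem hasDerivAt_exp_half (hf : HasDerivAt f (deriv f x) x) :
    HasDerivAt (fun r => exp (f r / 2)) (deriv f x / 2 * exp (f x / 2)) x := by
  refine (hf.div_const 2).exp.congr_deriv ?_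
  ring

theorem hasDerivAt_deriv_mul_exp_half (hf : HasDerivAt f (deriv f x) x)
    (hf' : HasDerivAt (deriv f) f'' x) :
    HasDerivAt (fun r => deriv f r / 2 * exp (f r / 2))
      ((f'' / 2 + deriv f x ^ 2 / 4) * exp (f x / 2)) x := by
  refine ((hf'.div_const 2).mul (hasDerivAt_exp_half hf)).congr_deriv ?_
  ring

theorem hasDerivAt_deriv_mul_exp_half_div_self (hx : x ≠ 0)
    (hf : HasDerivAt f (deriv f x) x) (hf' : HasDerivAt (deriv f) f'' x)
    (hVC : deriv f x * (2 - x * deriv f x) - 2 * x * f'' = 0) :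
    HasDerivAt (fun r => deriv f r / 2 * exp (f r / 2))
      (deriv f x / 2 * exp (f x / 2) / x) x := by
  refine (hasDerivAt_deriv_mul_exp_half hf hf').congr_deriv ?_
  field_simp
  linear_combination -2 * hVC

end

theorem vanishing_complexity_flat_lambda
    (R₀ : ℝ) (hR₀ : 0 < R₀) (f g : ℝ → ℝ)
    (hf : DifferentiableOn ℝ f (Ioo 0 R₀))
    (hf' : DifferentiableOn ℝ (deriv f) (Ioo 0 R₀))
    (hf'ne : ∀ r ∈ Ioo 0 R₀, deriv f r ≠ 0)
    (hg' : ∀ r ∈ Ioo 0 R₀, deriv g r = 0)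
    (hVC : ∀ r ∈ Ioo 0 R₀,
      deriv f r * (r * deriv g r - r * deriv f r + 2) - 2 * r * deriv (deriv f) r = 0) :
    ∃ A B : ℝ, B ≠ 0 ∧ ∀ r ∈ Ioo 0 R₀, Real.exp (f r) = (A + B * r ^ 2) ^ 2 := by
  have hfd : ∀ r ∈ Ioo 0 R₀, HasDerivAt f (deriv f r) r := fun r hr =>
    (hf.differentiableAt (isOpen_Ioo.mem_nhds hr)).hasDerivAt
  have hfd' : ∀ r ∈ Ioo 0 R₀, HasDerivAt (deriv f) (deriv (deriv f) r) r := fun r hr =>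
    (hf'.differentiableAt (isOpen_Ioo.mem_nhds hr)).hasDerivAt
  obtain ⟨c, hc⟩ := isOpen_Ioo.exists_eq_mul_of_hasDerivAt_div_self isPreconnected_Ioo
    (fun h => lt_irrefl _ h.1) fun r hr =>
      hasDerivAt_deriv_mul_exp_half_div_self hr.1.ne' (hfd r hr) (hfd' r hr)
        (by linear_combination hVC r hr - r * deriv f r * hg' r hr)
  obtain ⟨A, hA⟩ := isOpen_Ioo.exists_eq_add_mul_sq_of_hasDerivAt isPreconnected_Ioo
    fun r hr => hc r hr ▸ hasDerivAt_exp_half (hfd r hr)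
  refine ⟨A, c / 2, ?_, fun r hr => ?_⟩
  · have hmid : R₀ / 2 ∈ Ioo 0 R₀ := ⟨by linarith, by linarith⟩
    have hw := hc _ hmid
    have : c * (R₀ / 2) ≠ 0 := hw ▸ mul_ne_zero (div_ne_zero (hf'ne _ hmid) two_ne_zero)
      (exp_pos _).ne'
    exact div_ne_zero (left_ne_zero_of_mul this) two_ne_zero
  · rw [← hA r hr, ← exp_nat_mul]
    ring_nf
end
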